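/- (Proposition 2, two-step recurrence.) Assume D₁ + m·id is bijective on V for every positive integer m. For q ∈ V let Pₖ q = (𝒜₁𝒜₂⋯𝒜ₖ)(q) ∈ V[x], where q is viewed as a constant polynomial (and P₀ q = q). Then for every integer k ≥ 1 there exist linear maps αₖ, βₖ, γₖ : V → V such that for all q ∈ V: x·(Pₖ q) = P_{k+1}(αₖ q) + Pₖ(βₖ q) + P_{k−1}(γₖ q), and moreover αₖ = (D₁ + (2k+1))⁻¹ ∘ (D₁ + (2k+2))⁻¹ ∘ (D₁ + (k+1)). -/

import Mathlib

/-- Multiplication by `x` on `V[x]`, where a polynomial with coefficients in `V`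
is encoded as a finitely supported function `ℕ →₀ V` (its coefficients). -/
noncomputable def xmul {V : Type*} [AddCommGroup V] [Module ℂ V] (r : ℕ →₀ V) : ℕ →₀ V :=
  Finsupp.mapDomain (· + 1) r

/-- Formal differentiation `r ↦ r′` on `V[x]`. -/
noncomputable def fder {V : Type*} [AddCommGroup V] [Module ℂ V] (r : ℕ →₀ V) : ℕ →₀ V :=
  r.sum fun n v => Finsupp.single (n - 1) ((n : ℂ) • v)

/-- Multiplication by `x² − 1` on `V[x]`. -/
noncomputable def qmul {V : Type*} [AddCommGroup V] [Module ℂ V] (r : ℕ →₀ V) : ℕ →₀ V :=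
  xmul (xmul r) - r

/-- Coefficientwise action of a linear map `D : V → V` on `V[x]`. -/
noncomputable def cmap {V : Type*} [AddCommGroup V] [Module ℂ V] (D : V →ₗ[ℂ] V)
    (r : ℕ →₀ V) : ℕ →₀ V :=
  Finsupp.mapRange D (map_zero D) r

/-- The operator `𝒜ⱼ r = x·(2j·r + D₁r) + D₂r + (x²−1)·r′` on `V[x]`. -/
noncomputable def Aop {V : Type*} [AddCommGroup V] [Module ℂ V] (D₁ D₂ : V →ₗ[ℂ] V)
    (j : ℕ) (r : ℕ →₀ V) : ℕ →₀ V :=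
  xmul ((2 * (j : ℂ)) • r + cmap D₁ r) + cmap D₂ r + qmul (fder r)

/-- The composition `𝒜₁𝒜₂⋯𝒜ₖ` on `V[x]` (the identity for `k = 0`). -/
noncomputable def Aprod {V : Type*} [AddCommGroup V] [Module ℂ V] (D₁ D₂ : V →ₗ[ℂ] V) :
    ℕ → (ℕ →₀ V) → (ℕ →₀ V)
  | 0 => id
  | (k + 1) => fun r => Aprod D₁ D₂ k (Aop D₁ D₂ (k + 1) r)

section Lemmas
variable {V : Type*} [AddCommGroup V] [Module ℂ V]

theorem xmul_add (r s : ℕ →₀ V) : xmul (r + s) = xmul r + xmul s :=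
  Finsupp.mapDomain_add

theorem xmul_smul (c : ℂ) (r : ℕ →₀ V) : xmul (c • r) = c • xmul r :=
  Finsupp.mapDomain_smul c r

theorem xmul_zero : xmul (0 : ℕ →₀ V) = 0 := Finsupp.mapDomain_zero

theorem xmul_single (n : ℕ) (v : V) : xmul (Finsupp.single n v) = Finsupp.single (n + 1) v :=
  Finsupp.mapDomain_single

theorem fder_add (r s : ℕ →₀ V) : fder (r + s) = fder r + fder s := by
  unfold fder
  rw [Finsupp.sum_add_index]
  · intro n _; simp
  · intro n _ v w; rw [smul_add, Finsupp.single_add]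

theorem fder_zero : fder (0 : ℕ →₀ V) = 0 := by simp [fder]

theorem fder_single (n : ℕ) (v : V) :
    fder (Finsupp.single n v) = Finsupp.single (n - 1) ((n : ℂ) • v) := by
  unfold fder
  rw [Finsupp.sum_single_index]
  simp

theorem fder_smul (c : ℂ) (r : ℕ →₀ V) : fder (c • r) = c • fder r := by
  unfold fder
  have h0 : ∀ (i : ℕ), Finsupp.single (i-1) ((i:ℂ) • (0:V)) = 0 := fun i => by simp
  rw [Finsupp.sum_smul_index' h0, Finsupp.smul_sum]
  congr 1; funext n v
  rw [smul_comm, Finsupp.smul_single]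

theorem qmul_add (r s : ℕ →₀ V) : qmul (r + s) = qmul r + qmul s := by
  unfold qmul; rw [xmul_add, xmul_add]; abel

theorem qmul_smul (c : ℂ) (r : ℕ →₀ V) : qmul (c • r) = c • qmul r := by
  unfold qmul; rw [xmul_smul, xmul_smul, smul_sub]

theorem qmul_zero : qmul (0 : ℕ →₀ V) = 0 := by simp [qmul, xmul_zero]

theorem qmul_single (n : ℕ) (v : V) :
    qmul (Finsupp.single n v) = Finsupp.single (n + 2) v - Finsupp.single n v := by
  unfold qmul; rw [xmul_single, xmul_single]

theorem cmap_add (D : V →ₗ[ℂ] V) (r s : ℕ →₀ V) : cmap D (r + s) = cmap D r + cmap D s := by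
  unfold cmap; rw [Finsupp.mapRange_add]; intro a b; exact map_add D a b

theorem cmap_smul (D : V →ₗ[ℂ] V) (c : ℂ) (r : ℕ →₀ V) : cmap D (c • r) = c • cmap D r := by
  unfold cmap
  ext n
  simp [Finsupp.mapRange_apply]

theorem cmap_zero (D : V →ₗ[ℂ] V) : cmap D (0 : ℕ →₀ V) = 0 := by simp [cmap]

theorem cmap_single (D : V →ₗ[ℂ] V) (n : ℕ) (v : V) :
    cmap D (Finsupp.single n v) = Finsupp.single n (D v) :=
  Finsupp.mapRange_single

theorem Aop_add (D₁ D₂ : V →ₗ[ℂ] V) (j : ℕ) (r s : ℕ →₀ V) :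
    Aop D₁ D₂ j (r + s) = Aop D₁ D₂ j r + Aop D₁ D₂ j s := by
  unfold Aop
  rw [smul_add, cmap_add, cmap_add, fder_add, qmul_add]
  rw [show (2*(j:ℂ))•r + (2*(j:ℂ))•s + (cmap D₁ r + cmap D₁ s)
      = ((2*(j:ℂ))•r + cmap D₁ r) + ((2*(j:ℂ))•s + cmap D₁ s) by abel]
  rw [xmul_add]; abel

theorem Aop_smul (D₁ D₂ : V →ₗ[ℂ] V) (j : ℕ) (c : ℂ) (r : ℕ →₀ V) :
    Aop D₁ D₂ j (c • r) = c • Aop D₁ D₂ j r := by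
  unfold Aop
  rw [smul_comm, cmap_smul, cmap_smul, fder_smul, qmul_smul, ← smul_add, xmul_smul]
  rw [smul_add, smul_add]

theorem Aop_zero (D₁ D₂ : V →ₗ[ℂ] V) (j : ℕ) : Aop D₁ D₂ j (0 : ℕ →₀ V) = 0 := by
  simp [Aop, cmap_zero, fder_zero, qmul_zero, xmul_zero]

theorem Aprod_add (D₁ D₂ : V →ₗ[ℂ] V) (k : ℕ) (r s : ℕ →₀ V) :
    Aprod D₁ D₂ k (r + s) = Aprod D₁ D₂ k r + Aprod D₁ D₂ k s := by
  induction k generalizing r s with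
  | zero => rfl
  | succ k ih => show Aprod D₁ D₂ k _ = _; rw [Aop_add, ih]; rfl

theorem Aprod_zero (D₁ D₂ : V →ₗ[ℂ] V) (k : ℕ) : Aprod D₁ D₂ k (0 : ℕ →₀ V) = 0 := by
  induction k with
  | zero => rfl
  | succ k ih => show Aprod D₁ D₂ k _ = _; rw [Aop_zero]; exact ih

theorem Aprod_sub_single (D₁ D₂ : V →ₗ[ℂ] V) (k : ℕ) (u w : V) :
    Aprod D₁ D₂ k (Finsupp.single 0 (u - w))
      = Aprod D₁ D₂ k (Finsupp.single 0 u) - Aprod D₁ D₂ k (Finsupp.single 0 w) := by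
  have h : Finsupp.single (0:ℕ) u = Finsupp.single 0 (u - w) + Finsupp.single 0 w := by
    rw [← Finsupp.single_add]; congr 1; abel
  have := Aprod_add D₁ D₂ k (Finsupp.single 0 (u - w)) (Finsupp.single 0 w)
  rw [← h] at this
  rw [this]; abel


-- derived sub lemmas
theorem xmul_sub (r s : ℕ →₀ V) : xmul (r - s) = xmul r - xmul s := by
  have h : r - s = r + (-1 : ℂ) • s := by rw [neg_one_smul]; abel
  rw [h, xmul_add, xmul_smul, neg_one_smul]; abel

theorem qmul_sub (r s : ℕ →₀ V) : qmul (r - s) = qmul r - qmul s := by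
  have h : r - s = r + (-1 : ℂ) • s := by rw [neg_one_smul]; abel
  rw [h, qmul_add, qmul_smul, neg_one_smul]; abel

theorem Aop_sub (D₁ D₂ : V →ₗ[ℂ] V) (j : ℕ) (r s : ℕ →₀ V) :
    Aop D₁ D₂ j (r - s) = Aop D₁ D₂ j r - Aop D₁ D₂ j s := by
  have h : r - s = r + (-1 : ℂ) • s := by rw [neg_one_smul]; abel
  rw [h, Aop_add, Aop_smul, neg_one_smul]; abel

-- evaluation of Aop on singles
theorem Aop_single0 (D₁ D₂ : V →ₗ[ℂ] V) (j : ℕ) (v : V) :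
    Aop D₁ D₂ j (Finsupp.single 0 v)
      = Finsupp.single 1 ((2 * (j : ℂ)) • v + D₁ v) + Finsupp.single 0 (D₂ v) := by
  unfold Aop
  rw [fder_single, cmap_single, cmap_single, Finsupp.smul_single, ← Finsupp.single_add,
    xmul_single]
  rw [show ((0:ℕ):ℂ) = 0 by norm_num, zero_smul, Finsupp.single_zero, qmul_zero, add_zero]

theorem Aop_single_succ (D₁ D₂ : V →ₗ[ℂ] V) (j : ℕ) (m : ℕ) (v : V) :
    Aop D₁ D₂ j (Finsupp.single (m + 1) v)
      = Finsupp.single (m + 2) ((2 * (j : ℂ)) • v + D₁ v) + Finsupp.single (m + 1) (D₂ v)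
        + ((m : ℂ) + 1) • Finsupp.single (m + 2) v - ((m : ℂ) + 1) • Finsupp.single m v := by
  unfold Aop
  rw [fder_single, cmap_single, cmap_single, Finsupp.smul_single, ← Finsupp.single_add,
    xmul_single]
  have h1 : (m + 1 : ℕ) - 1 = m := rfl
  rw [h1, qmul_single]
  push_cast
  rw [← Finsupp.smul_single, ← Finsupp.smul_single]
  simp only [show m+1+1 = m+2 from rfl, smul_sub]
  abel


-- C1: parameter shift
theorem cmap_shift (D₁ : V →ₗ[ℂ] V) (r : ℕ →₀ V) :
    cmap (D₁ + (2:ℂ) • (LinearMap.id : V →ₗ[ℂ] V)) r = cmap D₁ r + (2:ℂ) • r := by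
  ext n
  simp [cmap, Finsupp.mapRange_apply]

theorem Aop_shift (D₁ D₂ : V →ₗ[ℂ] V) (j : ℕ) (r : ℕ →₀ V) :
    Aop (D₁ + (2:ℂ) • (LinearMap.id : V →ₗ[ℂ] V)) D₂ j r = Aop D₁ D₂ (j + 1) r := by
  unfold Aop
  rw [cmap_shift]
  congr 2
  push_cast
  rw [show (2 * ((j:ℂ) + 1)) • r = (2*(j:ℂ)) • r + (2:ℂ) • r by rw [← add_smul]; ring_nf]
  abel

-- C2: left-peeling
theorem Aprod_peel (D₁ D₂ : V →ₗ[ℂ] V) (k : ℕ) (r : ℕ →₀ V) :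
    Aprod D₁ D₂ (k + 1) r
      = Aop D₁ D₂ 1 (Aprod (D₁ + (2:ℂ) • (LinearMap.id : V →ₗ[ℂ] V)) D₂ k r) := by
  induction k generalizing r with
  | zero => rfl
  | succ k ih =>
      show Aprod D₁ D₂ (k+1) (Aop D₁ D₂ (k+2) r) = _
      rw [ih (Aop D₁ D₂ (k+2) r), ← Aop_shift D₁ D₂ (k+1) r]
      rfl

-- C6: x-commutation
theorem Aop_xmul (D₁ D₂ : V →ₗ[ℂ] V) (j : ℕ) (s : ℕ →₀ V) :
    Aop D₁ D₂ j (xmul s) = xmul (Aop D₁ D₂ j s) + qmul s := by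
  induction s using Finsupp.induction_linear with
  | zero => simp only [xmul_zero, Aop_zero, qmul_zero, add_zero]
  | add f g hf hg =>
      rw [xmul_add, Aop_add, hf, hg, Aop_add, xmul_add, qmul_add]; abel
  | single n v =>
      rw [xmul_single]
      cases n with
      | zero =>
          rw [Aop_single_succ, Aop_single0, qmul_single]
          simp only [xmul_add, xmul_single]
          push_cast
          norm_num
          simp only [Finsupp.single_add, ← Finsupp.smul_single, smul_sub, smul_add]
          module
      | succ m =>
          rw [Aop_single_succ D₁ D₂ j (m+1) v, Aop_single_succ D₁ D₂ j m v, qmul_single]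
          simp only [xmul_add, xmul_sub, xmul_smul, xmul_single]
          push_cast
          simp only [add_assoc]
          norm_num
          simp only [Finsupp.single_add, ← Finsupp.smul_single, smul_sub, smul_add]
          module

-- C5: q-commutation
theorem Aop_qmul (D₁ D₂ : V →ₗ[ℂ] V) (s : ℕ →₀ V) :
    Aop D₁ D₂ 1 (qmul s) = qmul (Aop D₁ D₂ 2 s) := by
  induction s using Finsupp.induction_linear with
  | zero => rw [qmul_zero, Aop_zero, Aop_zero, qmul_zero]
  | add f g hf hg => rw [qmul_add, Aop_add, hf, hg, Aop_add, qmul_add]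
  | single n v =>
      rw [qmul_single, Aop_sub]
      cases n with
      | zero =>
          rw [show Finsupp.single (0+2:ℕ) v = Finsupp.single (1+1) v from rfl]
          rw [Aop_single_succ, Aop_single0, Aop_single0]
          simp only [qmul_add, qmul_sub, qmul_smul, qmul_single]
          push_cast
          norm_num
          simp only [Finsupp.single_add, ← Finsupp.smul_single, smul_sub, smul_add]
          module
      | succ m =>
          rw [show Finsupp.single (m+1+2:ℕ) v = Finsupp.single ((m+2)+1) v from rfl]
          rw [Aop_single_succ D₁ D₂ 1 (m+2) v, Aop_single_succ D₁ D₂ 1 m v,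
            Aop_single_succ D₁ D₂ 2 m v]
          simp only [qmul_add, qmul_sub, qmul_smul, qmul_single]
          push_cast
          simp only [add_assoc]
          norm_num
          simp only [Finsupp.single_add, ← Finsupp.smul_single, smul_sub, smul_add]
          module


-- convenient coe lemma
theorem NN_coe (D₁ : V →ₗ[ℂ] V) (m : ℕ) :
    ⇑(D₁ + ((m:ℕ):ℂ) • (LinearMap.id : V →ₗ[ℂ] V)) = fun v : V => D₁ v + ((m:ℕ):ℂ) • v := by
  funext v; simp

theorem NN_comm (D₁ : V →ₗ[ℂ] V) (x y : ℂ) :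
    (D₁ + x • (LinearMap.id : V →ₗ[ℂ] V)) ∘ₗ (D₁ + y • (LinearMap.id : V →ₗ[ℂ] V))
      = (D₁ + y • (LinearMap.id : V →ₗ[ℂ] V)) ∘ₗ (D₁ + x • (LinearMap.id : V →ₗ[ℂ] V)) := by
  ext v
  simp [LinearMap.add_apply, LinearMap.smul_apply, map_add, map_smul]
  module

theorem NN_bij (D₁ : V →ₗ[ℂ] V)
    (hbij : ∀ m : ℕ, 0 < m → Function.Bijective fun v : V => D₁ v + (m : ℂ) • v)
    (m : ℕ) (hm : 0 < m) :
    Function.Bijective ⇑(D₁ + ((m:ℕ):ℂ) • (LinearMap.id : V →ₗ[ℂ] V)) := by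
  rw [show ⇑(D₁ + ((m:ℕ):ℂ) • (LinearMap.id : V →ₗ[ℂ] V)) = fun v : V => D₁ v + (m : ℂ) • v from NN_coe D₁ m]
  exact hbij m hm

noncomputable def NNinv (D₁ : V →ₗ[ℂ] V) (m : ℕ)
    (h : Function.Bijective ⇑(D₁ + ((m:ℕ):ℂ) • (LinearMap.id : V →ₗ[ℂ] V))) : V →ₗ[ℂ] V :=
  (LinearEquiv.ofBijective (D₁ + ((m:ℕ):ℂ) • (LinearMap.id : V →ₗ[ℂ] V)) h).symm.toLinearMap

theorem NN_NNinv (D₁ : V →ₗ[ℂ] V) (m : ℕ) (h) :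
    (D₁ + ((m:ℕ):ℂ) • (LinearMap.id : V →ₗ[ℂ] V)) ∘ₗ NNinv D₁ m h = LinearMap.id := by
  ext v
  have := (LinearEquiv.ofBijective (D₁ + ((m:ℕ):ℂ) • (LinearMap.id : V →ₗ[ℂ] V)) h).apply_symm_apply v
  simpa [NNinv] using this

theorem NNinv_NN (D₁ : V →ₗ[ℂ] V) (m : ℕ) (h) :
    NNinv D₁ m h ∘ₗ (D₁ + ((m:ℕ):ℂ) • (LinearMap.id : V →ₗ[ℂ] V)) = LinearMap.id := by
  ext v
  have := (LinearEquiv.ofBijective (D₁ + ((m:ℕ):ℂ) • (LinearMap.id : V →ₗ[ℂ] V)) h).symm_apply_apply v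
  simpa [NNinv] using this

theorem NN_shift (D₁ : V →ₗ[ℂ] V) (m : ℕ) :
    (D₁ + (2:ℂ) • (LinearMap.id : V →ₗ[ℂ] V)) + ((m:ℕ):ℂ) • (LinearMap.id : V →ₗ[ℂ] V)
      = D₁ + (((m+2:ℕ)):ℂ) • (LinearMap.id : V →ₗ[ℂ] V) := by
  ext v
  simp [LinearMap.add_apply, LinearMap.smul_apply]
  push_cast
  module

theorem hbij_shift (D₁ : V →ₗ[ℂ] V)
    (hbij : ∀ m : ℕ, 0 < m → Function.Bijective fun v : V => D₁ v + (m : ℂ) • v) :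
    ∀ m : ℕ, 0 < m →
      Function.Bijective fun v : V => (D₁ + (2:ℂ) • (LinearMap.id : V →ₗ[ℂ] V)) v + (m : ℂ) • v := by
  intro m _
  have h : (fun v : V => (D₁ + (2:ℂ) • (LinearMap.id : V →ₗ[ℂ] V)) v + (m : ℂ) • v)
      = fun v : V => D₁ v + ((m+2:ℕ) : ℂ) • v := by
    funext v
    simp [LinearMap.add_apply, LinearMap.smul_apply]
    push_cast
    module
  rw [h]
  exact hbij (m+2) (by omega)


theorem Aprod_zero_eq (D₁ D₂ : V →ₗ[ℂ] V) (p : ℕ →₀ V) : Aprod D₁ D₂ 0 p = p := rfl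
theorem Aprod_one (D₁ D₂ : V →ₗ[ℂ] V) (p : ℕ →₀ V) : Aprod D₁ D₂ 1 p = Aop D₁ D₂ 1 p := rfl
theorem Aprod_two (D₁ D₂ : V →ₗ[ℂ] V) (p : ℕ →₀ V) :
    Aprod D₁ D₂ 2 p = Aop D₁ D₂ 1 (Aop D₁ D₂ 2 p) := rfl

theorem Aop_single1 (D₁ D₂ : V →ₗ[ℂ] V) (j : ℕ) (v : V) :
    Aop D₁ D₂ j (Finsupp.single 1 v)
      = Finsupp.single 2 ((2 * (j : ℂ)) • v + D₁ v) + Finsupp.single 1 (D₂ v)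
        + Finsupp.single 2 v - Finsupp.single 0 v := by
  rw [show Finsupp.single (1:ℕ) v = Finsupp.single (0+1) v from rfl, Aop_single_succ]
  norm_num

-- base case of master T
theorem masterT_base (D₁ D₂ : V →ₗ[ℂ] V)
    (hbij : ∀ m : ℕ, 0 < m → Function.Bijective fun v : V => D₁ v + (m : ℂ) • v) :
    ∃ a b c : V →ₗ[ℂ] V,
      ((D₁ + ((2*0+3:ℕ):ℂ) • (LinearMap.id : V →ₗ[ℂ] V)) ∘ₗ
        ((D₁ + ((2*0+4:ℕ):ℂ) • (LinearMap.id : V →ₗ[ℂ] V)) ∘ₗ a) = LinearMap.id) ∧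
      ∀ q : V,
        qmul (Aprod (D₁ + (2:ℂ) • (LinearMap.id : V →ₗ[ℂ] V)) D₂ 0 (Finsupp.single 0 q))
          = Aprod D₁ D₂ (0+2) (Finsupp.single 0 (a q))
            + Aprod D₁ D₂ (0+1) (Finsupp.single 0 (b q))
            + Aprod D₁ D₂ 0 (Finsupp.single 0 (c q)) := by
  have h2 := NN_bij D₁ hbij 2 (by norm_num)
  have h3 := NN_bij D₁ hbij 3 (by norm_num)
  have h4 := NN_bij D₁ hbij 4 (by norm_num)
  set i2 := NNinv D₁ 2 h2 with hi2
  set i3 := NNinv D₁ 3 h3 with hi3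
  set i4 := NNinv D₁ 4 h4 with hi4
  have hD2 : ∀ x : V, D₁ (i2 x) = x - ((2:ℕ):ℂ) • (i2 x) := by
    intro x
    have := LinearMap.ext_iff.mp (NN_NNinv D₁ 2 h2) x
    simp only [LinearMap.comp_apply, LinearMap.add_apply, LinearMap.smul_apply,
      LinearMap.id_apply] at this ⊢
    rw [← hi2] at this
    rw [eq_sub_iff_add_eq]; exact this
  have hD3 : ∀ x : V, D₁ (i3 x) = x - ((3:ℕ):ℂ) • (i3 x) := by
    intro x
    have := LinearMap.ext_iff.mp (NN_NNinv D₁ 3 h3) x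
    simp only [LinearMap.comp_apply, LinearMap.add_apply, LinearMap.smul_apply,
      LinearMap.id_apply] at this ⊢
    rw [← hi3] at this
    rw [eq_sub_iff_add_eq]; exact this
  have hD4 : ∀ x : V, D₁ (i4 x) = x - ((4:ℕ):ℂ) • (i4 x) := by
    intro x
    have := LinearMap.ext_iff.mp (NN_NNinv D₁ 4 h4) x
    simp only [LinearMap.comp_apply, LinearMap.add_apply, LinearMap.smul_apply,
      LinearMap.id_apply] at this ⊢
    rw [← hi4] at this
    rw [eq_sub_iff_add_eq]; exact this
  refine ⟨i4 ∘ₗ i3,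
    -(i2 ∘ₗ (((D₁ + ((2:ℕ):ℂ) • LinearMap.id) ∘ₗ D₂ + D₂ ∘ₗ (D₁ + ((4:ℕ):ℂ) • LinearMap.id))
        ∘ₗ (i4 ∘ₗ i3))),
    -LinearMap.id - ((D₂ ∘ₗ D₂ - (D₁ + ((4:ℕ):ℂ) • LinearMap.id)) ∘ₗ (i4 ∘ₗ i3))
      - D₂ ∘ₗ (-(i2 ∘ₗ (((D₁ + ((2:ℕ):ℂ) • LinearMap.id) ∘ₗ D₂
          + D₂ ∘ₗ (D₁ + ((4:ℕ):ℂ) • LinearMap.id)) ∘ₗ (i4 ∘ₗ i3)))), ?_, ?_⟩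
  · ext v
    rw [show (2*0+3:ℕ) = 3 from rfl, show (2*0+4:ℕ) = 4 from rfl]
    simp only [LinearMap.comp_apply, LinearMap.add_apply, LinearMap.smul_apply,
      LinearMap.id_apply, map_add, map_smul]
    simp only [map_add, map_smul, map_sub, hD2, hD3, hD4]
    push_cast
    module
  · intro q
    rw [Aprod_zero_eq, Aprod_two, Aprod_one, Aprod_zero_eq, qmul_single, Aop_single0,
      Aop_add, Aop_single1, Aop_single0, Aop_single0]
    refine Finsupp.ext fun n => ?_
    simp only [Finsupp.add_apply, Finsupp.sub_apply, Finsupp.single_apply,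
      LinearMap.comp_apply, LinearMap.add_apply, LinearMap.smul_apply, LinearMap.id_apply,
      LinearMap.neg_apply, LinearMap.sub_apply, map_add, map_smul, map_sub, map_neg]
    rcases n with _|_|_|n
    · norm_num
      try simp only [map_add, map_smul, map_sub, hD2, hD3, hD4]
      try push_cast
      module
    · norm_num
      try simp only [map_add, map_smul, map_sub, hD2, hD3, hD4]
      try push_cast
      module
    · norm_num
      try simp only [map_add, map_smul, map_sub, hD2, hD3, hD4]
      try push_cast
      module
    · norm_num

theorem masterT (D₂ : V →ₗ[ℂ] V) : ∀ (k : ℕ) (D₁ : V →ₗ[ℂ] V),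
    (∀ m : ℕ, 0 < m → Function.Bijective fun v : V => D₁ v + (m : ℂ) • v) →
    ∃ a b c : V →ₗ[ℂ] V,
      ((D₁ + ((2*k+3:ℕ):ℂ) • (LinearMap.id : V →ₗ[ℂ] V)) ∘ₗ
        ((D₁ + ((2*k+4:ℕ):ℂ) • (LinearMap.id : V →ₗ[ℂ] V)) ∘ₗ a) = LinearMap.id) ∧
      ∀ q : V,
        qmul (Aprod (D₁ + (2:ℂ) • (LinearMap.id : V →ₗ[ℂ] V)) D₂ k (Finsupp.single 0 q))
          = Aprod D₁ D₂ (k+2) (Finsupp.single 0 (a q))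
            + Aprod D₁ D₂ (k+1) (Finsupp.single 0 (b q))
            + Aprod D₁ D₂ k (Finsupp.single 0 (c q)) := by
  intro k
  induction k with
  | zero => intro D₁ hbij; exact masterT_base D₁ D₂ hbij
  | succ k ih =>
      intro D₁ hbij
      obtain ⟨a, b, c, ha, hrec⟩ :=
        ih (D₁ + (2:ℂ) • (LinearMap.id : V →ₗ[ℂ] V)) (hbij_shift D₁ hbij)
      refine ⟨a, b, c, ?_, ?_⟩
      · rw [NN_shift D₁ (2*k+3), NN_shift D₁ (2*k+4)] at ha
        rw [show 2*(k+1)+3 = 2*k+3+2 by ring, show 2*(k+1)+4 = 2*k+4+2 by ring]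
        exact ha
      · intro q
        rw [Aprod_peel (D₁ + (2:ℂ) • (LinearMap.id : V →ₗ[ℂ] V)) D₂ k (Finsupp.single 0 q),
          Aop_shift D₁ D₂ 1, ← Aop_qmul D₁ D₂, hrec q, Aop_add, Aop_add,
          ← Aprod_peel D₁ D₂ (k+2), ← Aprod_peel D₁ D₂ (k+1), ← Aprod_peel D₁ D₂ k]


theorem masterS_base (D₁ D₂ : V →ₗ[ℂ] V)
    (hbij : ∀ m : ℕ, 0 < m → Function.Bijective fun v : V => D₁ v + (m : ℂ) • v) :
    ∃ α β γ : V →ₗ[ℂ] V,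
      (∀ q : V, xmul (Aprod D₁ D₂ 0 (Finsupp.single 0 q))
        = Aprod D₁ D₂ (0+1) (Finsupp.single 0 (α q))
          + Aprod D₁ D₂ 0 (Finsupp.single 0 (β q))
          + Aprod D₁ D₂ (0-1) (Finsupp.single 0 (γ q))) ∧
      ((D₁ + ((2*0+2:ℕ):ℂ) • (LinearMap.id : V →ₗ[ℂ] V)) ∘ₗ
        ((D₁ + ((2*0+1:ℕ):ℂ) • (LinearMap.id : V →ₗ[ℂ] V)) ∘ₗ α)
          = D₁ + ((0+1:ℕ):ℂ) • (LinearMap.id : V →ₗ[ℂ] V)) ∧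
      (γ = 0) := by
  have h2 := NN_bij D₁ hbij 2 (by norm_num)
  set i2 := NNinv D₁ 2 h2 with hi2
  have hD2 : ∀ x : V, D₁ (i2 x) = x - ((2:ℕ):ℂ) • (i2 x) := by
    intro x
    have := LinearMap.ext_iff.mp (NN_NNinv D₁ 2 h2) x
    simp only [LinearMap.comp_apply, LinearMap.add_apply, LinearMap.smul_apply,
      LinearMap.id_apply] at this ⊢
    rw [← hi2] at this
    rw [eq_sub_iff_add_eq]; exact this
  refine ⟨i2, -(D₂ ∘ₗ i2), 0, ?_, ?_, rfl⟩
  · intro q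
    rw [Aprod_zero_eq, Aprod_one, Aop_single0, Aprod_zero_eq, Aprod_zero_eq, xmul_single]
    have hA : (2*((1:ℕ):ℂ)) • (i2 q) + D₁ (i2 q) = q := by
      rw [hD2]; push_cast; module
    rw [hA]
    simp only [LinearMap.neg_apply, LinearMap.comp_apply, LinearMap.zero_apply,
      Finsupp.single_zero, Finsupp.single_neg]
    abel
  · ext v
    simp only [LinearMap.comp_apply, LinearMap.add_apply, LinearMap.smul_apply,
      LinearMap.id_apply, map_add, map_smul]
    simp only [map_add, map_smul, map_sub, hD2]
    push_cast
    module

theorem masterS (D₂ : V →ₗ[ℂ] V) : ∀ (k : ℕ) (D₁ : V →ₗ[ℂ] V),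
    (∀ m : ℕ, 0 < m → Function.Bijective fun v : V => D₁ v + (m : ℂ) • v) →
    ∃ α β γ : V →ₗ[ℂ] V,
      (∀ q : V, xmul (Aprod D₁ D₂ k (Finsupp.single 0 q))
        = Aprod D₁ D₂ (k+1) (Finsupp.single 0 (α q))
          + Aprod D₁ D₂ k (Finsupp.single 0 (β q))
          + Aprod D₁ D₂ (k-1) (Finsupp.single 0 (γ q))) ∧
      ((D₁ + ((2*k+2:ℕ):ℂ) • (LinearMap.id : V →ₗ[ℂ] V)) ∘ₗ
        ((D₁ + ((2*k+1:ℕ):ℂ) • (LinearMap.id : V →ₗ[ℂ] V)) ∘ₗ α)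
          = D₁ + ((k+1:ℕ):ℂ) • (LinearMap.id : V →ₗ[ℂ] V)) ∧
      (k = 0 → γ = 0) := by
  intro k
  induction k with
  | zero =>
      intro D₁ hbij
      obtain ⟨α, β, γ, h1, h2, h3⟩ := masterS_base D₁ D₂ hbij
      exact ⟨α, β, γ, h1, h2, fun _ => h3⟩
  | succ k ih =>
      intro D₁ hbij
      obtain ⟨α', β', γ', hSrec, hSa, hS0⟩ :=
        ih (D₁ + (2:ℂ) • (LinearMap.id : V →ₗ[ℂ] V)) (hbij_shift D₁ hbij)
      obtain ⟨a, b, c, hTa, hTrec⟩ := masterT D₂ k D₁ hbij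
      refine ⟨α' - a, β' - b, γ' - c, ?_, ?_, fun h => absurd h (Nat.succ_ne_zero k)⟩
      · intro q
        have hxm : xmul (Aop D₁ D₂ 1
              (Aprod (D₁ + (2:ℂ) • (LinearMap.id : V →ₗ[ℂ] V)) D₂ k (Finsupp.single 0 q)))
            = Aop D₁ D₂ 1 (xmul
                (Aprod (D₁ + (2:ℂ) • (LinearMap.id : V →ₗ[ℂ] V)) D₂ k (Finsupp.single 0 q)))
              - qmul (Aprod (D₁ + (2:ℂ) • (LinearMap.id : V →ₗ[ℂ] V)) D₂ k
                  (Finsupp.single 0 q)) := by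
          rw [Aop_xmul]; abel
        rw [Aprod_peel D₁ D₂ k (Finsupp.single 0 q), hxm, hSrec q, hTrec q, Aop_add, Aop_add,
          ← Aprod_peel D₁ D₂ (k+1), ← Aprod_peel D₁ D₂ k]
        have hγ : Aop D₁ D₂ 1 (Aprod (D₁ + (2:ℂ) • (LinearMap.id : V →ₗ[ℂ] V)) D₂ (k-1)
              (Finsupp.single 0 (γ' q)))
            = Aprod D₁ D₂ k (Finsupp.single 0 (γ' q)) := by
          rcases k with _ | k'
          · rw [hS0 rfl]
            simp only [LinearMap.zero_apply, Finsupp.single_zero, Aprod_zero, Aop_zero]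
          · rw [show k'+1-1 = k' from rfl, ← Aprod_peel D₁ D₂ k']
        rw [hγ]
        simp only [LinearMap.sub_apply, Aprod_sub_single, show k+1-1 = k from rfl,
          show k+1+1 = k+2 from rfl]
        abel
      · rw [NN_shift D₁ (2*k+2), NN_shift D₁ (2*k+1), NN_shift D₁ (k+1)] at hSa
        rw [show 2*(k+1)+2 = 2*k+2+2 by ring, show 2*(k+1)+1 = 2*k+1+2 by ring,
          show (k+1)+1 = k+1+1 from rfl]
        have hcomm := NN_comm D₁ ((2*k+2+2:ℕ):ℂ) ((2*k+1+2:ℕ):ℂ)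
        have hTa' : (D₁ + ((2*k+1+2:ℕ):ℂ) • (LinearMap.id : V →ₗ[ℂ] V)) ∘ₗ
            ((D₁ + ((2*k+2+2:ℕ):ℂ) • (LinearMap.id : V →ₗ[ℂ] V)) ∘ₗ a) = LinearMap.id := by
          rw [show (2*k+1+2) = 2*k+3 by ring, show (2*k+2+2) = 2*k+4 by ring]
          exact hTa
        ext v
        have e1 := LinearMap.ext_iff.mp hSa v
        have e2 := LinearMap.ext_iff.mp hTa' v
        have e3 := LinearMap.ext_iff.mp hcomm (a v)
        simp only [LinearMap.comp_apply, LinearMap.sub_apply, LinearMap.add_apply,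
          LinearMap.smul_apply, LinearMap.id_apply, map_sub] at e1 e2 e3 ⊢
        rw [e1, e3, e2]
        push_cast
        module

end Lemmas

/-- Proposition 2 (two-step recurrence). Assume `D₁ + m·id` is bijective on `V` for every
positive integer `m`. For `q ∈ V` let `Pₖ q = (𝒜₁𝒜₂⋯𝒜ₖ)(q)` (`q` viewed as a constant
polynomial, `P₀ q = q`). Then for every `k ≥ 1` there are linear maps `αₖ, βₖ, γₖ : V → V`
with `x·(Pₖ q) = P_{k+1}(αₖ q) + Pₖ(βₖ q) + P_{k−1}(γₖ q)` for all `q`, and moreover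
`αₖ = (D₁ + (2k+1))⁻¹ ∘ (D₁ + (2k+2))⁻¹ ∘ (D₁ + (k+1))`, i.e.
`(D₁ + (2k+2)) ∘ (D₁ + (2k+1)) ∘ αₖ = D₁ + (k+1)`. -/
theorem stmt_5 {V : Type*} [AddCommGroup V] [Module ℂ V] (D₁ D₂ : V →ₗ[ℂ] V)
    (hbij : ∀ m : ℕ, 0 < m → Function.Bijective fun v : V => D₁ v + (m : ℂ) • v)
    (k : ℕ) (hk : 1 ≤ k) :
    ∃ α β γ : V →ₗ[ℂ] V,
      (∀ q : V,
        xmul (Aprod D₁ D₂ k (Finsupp.single 0 q)) =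
          Aprod D₁ D₂ (k + 1) (Finsupp.single 0 (α q)) +
            Aprod D₁ D₂ k (Finsupp.single 0 (β q)) +
            Aprod D₁ D₂ (k - 1) (Finsupp.single 0 (γ q))) ∧
      (D₁ + ((2 * k + 2 : ℕ) : ℂ) • LinearMap.id) ∘ₗ
          ((D₁ + ((2 * k + 1 : ℕ) : ℂ) • LinearMap.id) ∘ₗ α) =
        D₁ + ((k + 1 : ℕ) : ℂ) • LinearMap.id := by

  obtain ⟨α, β, γ, h1, h2, _⟩ := masterS D₂ k D₁ hbij
  exact ⟨α, β, γ, h1, h2⟩
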